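/- Let k > 0, n = k+1, and let Φ : [0,∞) → [0,∞) be a strictly convex C¹ function with Φ(0) = Φ'(0) = 0. If there are constants c > 0 and x₀ ≥ 0 with Φ(x) ≥ c x^{1+1/k} for all x ≥ x₀, then there are constants C > 0 and x₁ ≥ 0 with Ψ(x) ≥ C x^{1+1/n} for all x ≥ x₁. -/

import Mathlib

open MeasureTheory Filter Real Set
open scoped Topology ENNReal NNReal RealInnerProductSpace

noncomputable section

abbrev Plane : Type := EuclideanSpace ℝ (Fin 2)
abbrev Phase : Type := Plane × Plane

/-- Gravitational potential induced by a density on the plane. -/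
def Upot (ρ : Plane → ℝ) (x : Plane) : ℝ := -∫ y : Plane, ρ y / dist x y

/-- Kinetic energy. -/
def Ekin (f : Phase → ℝ) : ℝ := ∫ p : Phase, (‖p.2‖ ^ 2 / 2) * f p

/-- Casimir functional. -/
def Casimir (Φ : ℝ → ℝ) (f : Phase → ℝ) : ℝ := ∫ p : Phase, Φ (f p)

/-- Spatial density induced by a phase-space density. -/
def spatialDensity (f : Phase → ℝ) (x : Plane) : ℝ := ∫ v : Plane, f (x, v)

/-- Self-interaction potential energy. -/
def Epot1 (ρ : Plane → ℝ) : ℝ := -(1 / 2) * ∫ x : Plane, ∫ y : Plane, ρ x * ρ y / dist x y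

/-- External potential energy. -/
def EpotExt (ρext ρ : Plane → ℝ) : ℝ := -∫ x : Plane, ∫ y : Plane, ρ x * ρext y / dist x y

/-- Total potential energy. -/
def Epot (ρext ρ : Plane → ℝ) : ℝ := Epot1 ρ + EpotExt ρext ρ

/-- Casimir-Energy functional. -/
def EC (Φ : ℝ → ℝ) (ρext : Plane → ℝ) (f : Phase → ℝ) : ℝ :=
  Ekin f + Epot ρext (spatialDensity f) + Casimir Φ f

/-- The feasible set `F_M`. -/
def FM (Φ : ℝ → ℝ) (M : ℝ) : Set (Phase → ℝ) :=
  {f | Integrable f ∧ (∀ p, 0 ≤ f p) ∧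
       Integrable (fun p : Phase => (‖p.2‖ ^ 2 / 2) * f p) ∧
       Integrable (fun p : Phase => Φ (f p)) ∧
       (∫ p : Phase, f p) = M}

/-- The integrand functional defining `Ψ`. -/
def Ifun (Φ : ℝ → ℝ) (g : Plane → ℝ) : ℝ := ∫ v : Plane, ((‖v‖ ^ 2 / 2) * g v + Φ (g v))

/-- The constraint set for `Ψ`. -/
def Gset (Φ : ℝ → ℝ) (r : ℝ) : Set (Plane → ℝ) :=
  {g | Integrable g ∧ (∀ v, 0 ≤ g v) ∧
       Integrable (fun v : Plane => (‖v‖ ^ 2 / 2) * g v + Φ (g v)) ∧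
       (∫ v : Plane, g v) = r}

/-- The reduced Casimir function `Ψ`. -/
def Psi (Φ : ℝ → ℝ) (r : ℝ) : ℝ := sInf (Ifun Φ '' Gset Φ r)

/-- The reduced feasible set `F_M^r`. -/
def FMr (Φ : ℝ → ℝ) (M : ℝ) : Set (Plane → ℝ) :=
  {ρ | Integrable ρ ∧ (∀ x, 0 ≤ ρ x) ∧ MemLp ρ (ENNReal.ofReal (4 / 3)) ∧
       Integrable (fun x => Psi Φ (ρ x)) ∧ (∫ x : Plane, ρ x) = M}

/-- The reduced Casimir-Energy functional. -/
def ECr (Φ : ℝ → ℝ) (ρext ρ : Plane → ℝ) : ℝ :=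
  (∫ x : Plane, Psi Φ (ρ x)) + Epot ρext ρ

/-- The infimum of the reduced problem. -/
def IM (Φ : ℝ → ℝ) (ρext : Plane → ℝ) (M : ℝ) : ℝ := sInf (ECr Φ ρext '' FMr Φ M)

/-- Inverse of the derivative (on `[0,∞)`) of a function, extended by `0` on `(-∞,0]`. -/
def invDerivOn (F : ℝ → ℝ) (y : ℝ) : ℝ :=
  if y ≤ 0 then 0 else Function.invFun (derivWithin F (Set.Ici 0)) y

/-- A density on the plane is spherically symmetric and nonincreasing. -/
def SphSymmDecr (ρ : Plane → ℝ) : Prop :=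
  ∃ φ : ℝ → ℝ, AntitoneOn φ (Set.Ici 0) ∧ (∀ r ∈ Set.Ici (0 : ℝ), 0 ≤ φ r) ∧
    ∀ x : Plane, ρ x = φ ‖x‖

/-- A density on the plane is strictly symmetric decreasing. -/
def StrictSphSymmDecr (ρ : Plane → ℝ) : Prop :=
  ∃ φ : ℝ → ℝ, StrictAntiOn φ (Set.Ici 0) ∧ (∀ r ∈ Set.Ici (0 : ℝ), 0 ≤ φ r) ∧
    ∀ x : Plane, ρ x = φ ‖x‖

/-- Weak convergence in `L^p`, tested against all elements of the dual `L^q`. -/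
def TendstoWeakly {α : Type*} [MeasurableSpace α] (μ : Measure α) (q : ℝ)
    (ρ : ℕ → α → ℝ) (ρ₀ : α → ℝ) : Prop :=
  ∀ g : α → ℝ, MemLp g (ENNReal.ofReal q) μ →
    Tendsto (fun i => ∫ x, ρ i x * g x ∂μ) atTop (𝓝 (∫ x, ρ₀ x * g x ∂μ))

/-- Boundedness of a sequence in `L^p`. -/
def BoundedLp {α : Type*} [MeasurableSpace α] (μ : Measure α) (p : ℝ)
    (ρ : ℕ → α → ℝ) : Prop :=
  ∃ C : ℝ, ∀ i, eLpNorm (ρ i) (ENNReal.ofReal p) μ ≤ ENNReal.ofReal C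


/-! Split the mass `r = ∫ g` at the speed `R = r ^ (1 / (2n))`. Outside the disc of radius `R`
the mass is controlled by the kinetic energy divided by `R²`; inside it, the weak Young bound
`g ≤ t + t ^ (-1/k) g ^ (1 + 1/k)` and the growth `Φ(g) ≳ g ^ (1 + 1/k)` control it by
`t R² + t ^ (-1/k) ∫ Φ(g)`. With `t ~ r ^ (k/n)` the constant-size terms absorb at most half of
`r`, so the energy is at least a multiple of `r R² = r ^ (1 + 1/n)`. -/

theorem le_add_rpow_one_sub_mul_rpow {x t p : ℝ} (hx : 0 ≤ x) (ht : 0 < t) (hp : 1 ≤ p) :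
    x ≤ t + t ^ (1 - p) * x ^ p := by
  rcases le_or_gt x t with hxt | htx
  · have := mul_nonneg (rpow_nonneg ht.le (1 - p)) (rpow_nonneg hx p)
    linarith
  · calc x = t ^ (1 - p) * t ^ (p - 1) * x := by rw [← rpow_add ht]; simp
      _ ≤ t ^ (1 - p) * x ^ (p - 1) * x := by gcongr
      _ = t ^ (1 - p) * x ^ p := by
          rw [mul_assoc, ← rpow_add_one (ht.trans htx).ne', sub_add_cancel]
      _ ≤ t + t ^ (1 - p) * x ^ p := by linarith

theorem mul_rpow_le_add_of_forall_le {Φ : ℝ → ℝ} {c p x₀ : ℝ} (hc : 0 ≤ c) (hp : 0 ≤ p)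
    (hx₀ : 0 ≤ x₀) (hΦ : ∀ x, 0 ≤ x → 0 ≤ Φ x) (hlow : ∀ x, x₀ ≤ x → c * x ^ p ≤ Φ x)
    {x : ℝ} (hx : 0 ≤ x) : c * x ^ p ≤ Φ x + c * x₀ ^ p := by
  have hK : 0 ≤ c * x₀ ^ p := mul_nonneg hc (rpow_nonneg hx₀ p)
  rcases le_or_gt x₀ x with h | h
  · linarith [hlow x h]
  · have : c * x ^ p ≤ c * x₀ ^ p := by gcongr
    linarith [hΦ x hx]

theorem le_indicator_closedBall_add_mul_add_mul {E : Type*} [SeminormedAddCommGroup E] {Φ : ℝ → ℝ}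
    {c p K t R y : ℝ} (hc : 0 < c) (hp : 1 ≤ p) (ht : 0 < t) (hR : 0 < R)
    (hΦ : ∀ x, 0 ≤ x → 0 ≤ Φ x) (hK : ∀ x, 0 ≤ x → c * x ^ p ≤ Φ x + K) (hy : 0 ≤ y)
    (v : E) :
    y ≤ (Metric.closedBall 0 R).indicator (fun _ => t + t ^ (1 - p) * K / c) v
      + t ^ (1 - p) / c * Φ y + 2 / R ^ 2 * (‖v‖ ^ 2 / 2 * y) := by
  have hkin : 0 ≤ 2 / R ^ 2 * (‖v‖ ^ 2 / 2 * y) := by positivity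
  by_cases hv : v ∈ Metric.closedBall 0 R
  · rw [indicator_of_mem hv]
    have hyp : y ^ p ≤ (Φ y + K) / c := by rw [le_div_iff₀ hc, mul_comm]; exact hK y hy
    calc y ≤ t + t ^ (1 - p) * y ^ p := le_add_rpow_one_sub_mul_rpow hy ht hp
      _ ≤ t + t ^ (1 - p) * ((Φ y + K) / c) := by gcongr
      _ = t + t ^ (1 - p) * K / c + t ^ (1 - p) / c * Φ y := by ring
      _ ≤ _ := by linarith
  · rw [indicator_of_notMem hv, zero_add]
    have hRv : R ^ 2 ≤ ‖v‖ ^ 2 := by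
      rw [Metric.mem_closedBall, dist_zero_right, not_le] at hv
      gcongr
    have hΦy : 0 ≤ t ^ (1 - p) / c * Φ y := by have := hΦ y hy; positivity
    have : y ≤ 2 / R ^ 2 * (‖v‖ ^ 2 / 2 * y) := by
      rw [show 2 / R ^ 2 * (‖v‖ ^ 2 / 2 * y) = ‖v‖ ^ 2 / R ^ 2 * y by ring]
      exact le_mul_of_one_le_left hy ((one_le_div (by positivity)).2 hRv)
    linarith

theorem measureReal_closedBall_plane {R : ℝ} (hR : 0 ≤ R) :
    volume.real (Metric.closedBall (0 : Plane) R) = π * R ^ 2 := by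
  simp [measureReal_def, ENNReal.toReal_ofReal hR, ENNReal.toReal_ofReal pi_pos.le, mul_comm]

section Gset

variable {Φ : ℝ → ℝ} {g : Plane → ℝ} {r : ℝ}

theorem integrable_kinetic_of_mem_Gset (hΦ : ∀ x, 0 ≤ x → 0 ≤ Φ x) (hg : g ∈ Gset Φ r) :
    Integrable (fun v : Plane => ‖v‖ ^ 2 / 2 * g v) := by
  obtain ⟨hg_int, hg0, hsum, -⟩ := hg
  refine hsum.mono' (by fun_prop) (Eventually.of_forall fun v => ?_)
  have := hΦ _ (hg0 v)
  rw [Real.norm_of_nonneg (by have := hg0 v; positivity)]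
  linarith

theorem integrable_comp_of_mem_Gset (hΦ : ∀ x, 0 ≤ x → 0 ≤ Φ x) (hg : g ∈ Gset Φ r) :
    Integrable (fun v : Plane => Φ (g v)) := by
  refine (hg.2.2.1.sub (integrable_kinetic_of_mem_Gset hΦ hg)).congr
    (Eventually.of_forall fun v => ?_)
  simp

theorem Ifun_eq_add_of_mem_Gset (hΦ : ∀ x, 0 ≤ x → 0 ≤ Φ x) (hg : g ∈ Gset Φ r) :
    Ifun Φ g = (∫ v : Plane, ‖v‖ ^ 2 / 2 * g v) + ∫ v : Plane, Φ (g v) :=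
  integral_add (integrable_kinetic_of_mem_Gset hΦ hg) (integrable_comp_of_mem_Gset hΦ hg)

theorem indicator_mem_Gset (hΦ0 : Φ 0 = 0) (hr : 0 ≤ r) :
    (Metric.closedBall (0 : Plane) 1).indicator (fun _ => r / π) ∈ Gset Φ r := by
  have hball := measurableSet_closedBall (x := (0 : Plane)) (ε := 1)
  refine ⟨(integrable_indicator_iff hball).2 (integrableOn_const measure_closedBall_lt_top.ne),
    fun v => indicator_nonneg (fun _ _ => by positivity) v, ?_, ?_⟩
  · have hfun : (fun v : Plane => ‖v‖ ^ 2 / 2 *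
        (Metric.closedBall (0 : Plane) 1).indicator (fun _ => r / π) v
          + Φ ((Metric.closedBall (0 : Plane) 1).indicator (fun _ => r / π) v))
        = (Metric.closedBall (0 : Plane) 1).indicator
            (fun v => ‖v‖ ^ 2 / 2 * (r / π) + Φ (r / π)) := by
      funext v
      by_cases hv : v ∈ Metric.closedBall (0 : Plane) 1 <;> simp [hv, hΦ0]
    rw [hfun, integrable_indicator_iff hball]
    exact ContinuousOn.integrableOn_compact (isCompact_closedBall _ _) (by fun_prop)
  · rw [integral_indicator_const _ hball, measureReal_closedBall_plane zero_le_one, smul_eq_mul]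
    field_simp

theorem mass_le_of_mem_Gset {c p K t R a : ℝ} (hc : 0 < c) (hp : 1 ≤ p) (ht : 0 < t)
    (hR : 0 < R) (hΦ : ∀ x, 0 ≤ x → 0 ≤ Φ x) (hK : ∀ x, 0 ≤ x → c * x ^ p ≤ Φ x + K)
    (ha₁ : t ^ (1 - p) / c ≤ a) (ha₂ : 2 / R ^ 2 ≤ a) (hg : g ∈ Gset Φ r) :
    r ≤ (t + t ^ (1 - p) * K / c) * (π * R ^ 2) + a * Ifun Φ g := by
  have hkin := integrable_kinetic_of_mem_Gset hΦ hg
  have hcomp := integrable_comp_of_mem_Gset hΦ hg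
  rw [Ifun_eq_add_of_mem_Gset hΦ hg]
  obtain ⟨hg_int, hg0, -, hmass⟩ := hg
  set B := Metric.closedBall (0 : Plane) R
  have hball : MeasurableSet B := measurableSet_closedBall
  have hind : Integrable (B.indicator fun _ => t + t ^ (1 - p) * K / c) :=
    (integrable_indicator_iff hball).2 (integrableOn_const measure_closedBall_lt_top.ne)
  have hind_comp : Integrable fun v =>
      B.indicator (fun _ => t + t ^ (1 - p) * K / c) v + t ^ (1 - p) / c * Φ (g v) :=
    hind.add (hcomp.const_mul _)
  have hIK : 0 ≤ ∫ v : Plane, ‖v‖ ^ 2 / 2 * g v :=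
    integral_nonneg fun v => by have := hg0 v; positivity
  have hIP : 0 ≤ ∫ v : Plane, Φ (g v) := integral_nonneg fun v => hΦ _ (hg0 v)
  calc r = ∫ v, g v := hmass.symm
    _ ≤ ∫ v, (B.indicator (fun _ => t + t ^ (1 - p) * K / c) v
          + t ^ (1 - p) / c * Φ (g v) + 2 / R ^ 2 * (‖v‖ ^ 2 / 2 * g v)) :=
        integral_mono hg_int (hind_comp.add (hkin.const_mul _))
          fun v => le_indicator_closedBall_add_mul_add_mul hc hp ht hR hΦ hK (hg0 v) v
    _ = (t + t ^ (1 - p) * K / c) * (π * R ^ 2) + t ^ (1 - p) / c * (∫ v, Φ (g v))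
          + 2 / R ^ 2 * ∫ v, ‖v‖ ^ 2 / 2 * g v := by
        rw [integral_add hind_comp (hkin.const_mul _), integral_add hind (hcomp.const_mul _),
          integral_indicator_const _ hball, measureReal_closedBall_plane hR.le,
          integral_const_mul, integral_const_mul, smul_eq_mul, mul_comm (π * R ^ 2)]
    _ ≤ _ := by nlinarith

theorem mass_le_scaled_of_mem_Gset {k c K s : ℝ} (hk : 0 < k) (hc : 0 < c) (hs : 0 < s)
    (hΦ : ∀ x, 0 ≤ x → 0 ≤ Φ x) (hK : ∀ x, 0 ≤ x → c * x ^ (1 + 1 / k) ≤ Φ x + K)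
    (hg : g ∈ Gset Φ r) :
    r ≤ s ^ (k + 1) / 4 + (4 * π) ^ (1 / k) * K * π / c
      + ((4 * π) ^ (1 / k) / c + 2) / s * Ifun Φ g := by
  have hpow : (s ^ k / (4 * π)) ^ (1 - (1 + 1 / k)) = (4 * π) ^ (1 / k) / s := by
    rw [show 1 - (1 + 1 / k) = -(1 / k) by ring, div_rpow (by positivity) (by positivity),
      ← rpow_mul hs.le, mul_neg, mul_one_div_cancel hk.ne', rpow_neg_one,
      rpow_neg (by positivity)]
    field_simp
  have hcoef : 0 ≤ (4 * π) ^ (1 / k) / c := by positivity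
  have h := mass_le_of_mem_Gset (p := 1 + 1 / k) (t := s ^ k / (4 * π)) (R := √s)
    (a := ((4 * π) ^ (1 / k) / c + 2) / s) hc (by simp [hk.le]) (by positivity)
    (sqrt_pos.2 hs) hΦ hK
    (by rw [hpow, div_right_comm]; gcongr; linarith)
    (by rw [sq_sqrt hs.le]; gcongr; linarith) hg
  rw [hpow, sq_sqrt hs.le] at h
  convert h using 2
  rw [rpow_add_one hs.ne']
  field_simp

end Gset

theorem psi_lower_growth_general
    (k n c x₀ : ℝ) (hk : 0 < k) (hn : n = k + 1) (hc : 0 < c) (hx₀ : 0 ≤ x₀)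
    (Φ : ℝ → ℝ)
    (hPhiNonneg : ∀ x : ℝ, 0 ≤ x → 0 ≤ Φ x)
    (hPhi0 : Φ 0 = 0)
    (hlow : ∀ x : ℝ, x₀ ≤ x → c * x ^ (1 + 1 / k) ≤ Φ x) :
    ∃ C > (0 : ℝ), ∃ x₁ ≥ (0 : ℝ), ∀ x : ℝ, x₁ ≤ x →
      C * x ^ (1 + 1 / n) ≤ Psi Φ x := by
  set A := (4 * π) ^ (1 / k) / c + 2
  set B := (4 * π) ^ (1 / k) * (c * x₀ ^ (1 + 1 / k)) * π / c
  have hK (x : ℝ) (hx : 0 ≤ x) :=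
    mul_rpow_le_add_of_forall_le hc.le (by positivity) hx₀ hPhiNonneg hlow hx
  refine ⟨1 / (2 * A), by positivity, 4 * B + 1, by positivity, fun r hr => ?_⟩
  have hr0 : 0 < r := by linarith [show 0 ≤ B by positivity]
  set s := r ^ (1 / n)
  have hs : 0 < s := rpow_pos_of_pos hr0 _
  have hsr : s ^ (k + 1) = r := by
    rw [← rpow_mul hr0.le, ← hn, one_div_mul_cancel (by linarith), rpow_one]
  have hrs : r ^ (1 + 1 / n) = r * s := by rw [rpow_add hr0, rpow_one]
  rw [hrs]
  refine le_csInf (Nonempty.image _ ⟨_, indicator_mem_Gset hPhi0 hr0.le⟩)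
    (forall_mem_image.2 fun g hg => ?_)
  have h := mass_le_scaled_of_mem_Gset hk hc hs hPhiNonneg hK hg
  rw [hsr] at h
  have hI : r / 2 ≤ A / s * Ifun Φ g := by linarith
  rw [div_mul_eq_mul_div, le_div_iff₀ hs] at hI
  rw [one_div_mul_eq_div, div_le_iff₀' (by positivity)]
  linarith

theorem psi_lower_growth
    (k n c x₀ : ℝ) (hk : 0 < k) (hn : n = k + 1) (hc : 0 < c) (hx₀ : 0 ≤ x₀)
    (Φ : ℝ → ℝ)
    (hPhiConv : StrictConvexOn ℝ (Set.Ici 0) Φ)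
    (hPhiC1 : ContDiffOn ℝ 1 Φ (Set.Ici 0))
    (hPhiNonneg : ∀ x : ℝ, 0 ≤ x → 0 ≤ Φ x)
    (hPhi0 : Φ 0 = 0)
    (hPhi'0 : derivWithin Φ (Set.Ici 0) 0 = 0)
    (hlow : ∀ x : ℝ, x₀ ≤ x → c * x ^ (1 + 1 / k) ≤ Φ x) :
    ∃ C > (0 : ℝ), ∃ x₁ ≥ (0 : ℝ), ∀ x : ℝ, x₁ ≤ x →
      C * x ^ (1 + 1 / n) ≤ Psi Φ x :=
  psi_lower_growth_general k n c x₀ hk hn hc hx₀ Φ hPhiNonneg hPhi0 hlow
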